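/- Van den Nest's theorem: for a graph G with vertex v, the graph state of the local complement satisfies |G * v⟩ = M_v |G⟩ up to a global phase, where M_v = X(π/2)_v · ∏_{u ∈ N(v)} Z(−π/2)_u. -/

import Mathlib

open scoped Classical Matrix ComplexConjugate

noncomputable section

/-- The Hadamard matrix. -/
def Hm : Matrix (Fin 2) (Fin 2) ℂ := (Real.sqrt 2 : ℂ)⁻¹ • !![1, 1; 1, -1]

/-- Z rotation `diag(1, e^{iα})`. -/
def Zrot (α : ℝ) : Matrix (Fin 2) (Fin 2) ℂ := !![1, 0; 0, Complex.exp (α * Complex.I)]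

/-- X rotation `H ⬝ Z(α) ⬝ H`. -/
def Xrot (α : ℝ) : Matrix (Fin 2) (Fin 2) ℂ := Hm * Zrot α * Hm

/-- Pauli X. -/
def Xm : Matrix (Fin 2) (Fin 2) ℂ := !![0, 1; 1, 0]

/-- Pauli Z. -/
def Zm : Matrix (Fin 2) (Fin 2) ℂ := !![1, 0; 0, -1]

/-- A single-qubit operator `A` applied on qubit `v` of an `n`-qubit system
(identity on every other tensor factor). -/
def act1 {n : ℕ} (A : Matrix (Fin 2) (Fin 2) ℂ) (v : Fin n) :
    Matrix (Fin n → Fin 2) (Fin n → Fin 2) ℂ :=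
  fun x y => A (x v) (y v) * ∏ w : Fin n, if w = v then 1 else (if x w = y w then 1 else 0)

/-- Pauli `Z` applied on every qubit in `S` (a product of commuting diagonal gates). -/
def pauliZs {n : ℕ} (S : Finset (Fin n)) : Matrix (Fin n → Fin 2) (Fin n → Fin 2) ℂ :=
  Matrix.diagonal fun x => ∏ u ∈ S, if x u = 1 then (-1 : ℂ) else 1

/-- `Z(α)` applied on every qubit in `S`. -/
def zrotS {n : ℕ} (α : ℝ) (S : Finset (Fin n)) : Matrix (Fin n → Fin 2) (Fin n → Fin 2) ℂ :=
  Matrix.diagonal fun x => ∏ u ∈ S, if x u = 1 then Complex.exp (α * Complex.I) else 1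

/-- The controlled-Z gate on qubits `u`, `v`. -/
def CZ {n : ℕ} (u v : Fin n) : Matrix (Fin n → Fin 2) (Fin n → Fin 2) ℂ :=
  Matrix.diagonal fun x => if x u = 1 ∧ x v = 1 then (-1 : ℂ) else 1

/-- The graph state `|G⟩ = (∏_{uv ∈ E} CZ_{uv}) |+⟩^{⊗ n}`, written out in amplitudes
(the CZ gates are diagonal, so the product over edges is the product of the signs). -/
def graphState {n : ℕ} (G : SimpleGraph (Fin n)) : (Fin n → Fin 2) → ℂ :=
  fun x => ((Real.sqrt 2 : ℂ))⁻¹ ^ n *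
    ∏ a : Fin n, ∏ b : Fin n,
      if a < b ∧ G.Adj a b ∧ x a = 1 ∧ x b = 1 then (-1 : ℂ) else 1

/-- Local complementation of `G` at `v`: adjacency is toggled on pairs of distinct
neighbours of `v` and unchanged elsewhere. -/
def localComp {V : Type*} (G : SimpleGraph V) (v : V) : SimpleGraph V where
  Adj x y := x ≠ y ∧ (if G.Adj v x ∧ G.Adj v y then ¬ G.Adj x y else G.Adj x y)
  symm := by
    refine ⟨?_⟩
    rintro x y ⟨hxy, h⟩
    refine ⟨hxy.symm, ?_⟩
    by_cases hc : G.Adj v x ∧ G.Adj v y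
    · rw [if_pos ⟨hc.2, hc.1⟩]
      rw [if_pos hc] at h
      exact fun h' => h h'.symm
    · rw [if_neg fun h' => hc ⟨h'.2, h'.1⟩]
      rw [if_neg hc] at h
      exact h.symm
  loopless := ⟨by rintro x ⟨h, -⟩; exact h rfl⟩


open Finset in
private lemma vdn_key (k : ℕ) :
    ((1+Complex.I)/2) * (-Complex.I)^k * (1 + (-Complex.I)*(-1)^k) = Complex.I^(k^2 - k) ∧
    ((1+Complex.I)/2) * (-Complex.I)^k * ((-Complex.I) + (-1)^k)
      = (-1)^k * Complex.I^(k^2-k) := by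
  induction k with
  | zero =>
    constructor <;>
    · field_simp
      linear_combination -Complex.I_sq
  | succ k ih =>
    have hsq : k ≤ k^2 := Nat.le_self_pow two_ne_zero k
    have h1 : (k+1)^2 - (k+1) = (k^2 - k) + 2*k := by
      have : (k+1)^2 = k^2 + 2*k + 1 := by ring
      omega
    have h2 : (Complex.I)^((k+1)^2-(k+1)) = Complex.I^(k^2-k) * (-1)^k := by
      rw [h1, pow_add, pow_mul, Complex.I_sq]
    have hP2 : ((-1:ℂ))^k * (-1)^k = 1 := by
      rw [← pow_add, ← two_mul, pow_mul]; norm_num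
    rw [h2]
    constructor
    · linear_combination ih.2 - ((1+Complex.I)/2) * (-Complex.I)^k * (-1)^k * Complex.I_sq
    · linear_combination (-1:ℂ)*ih.1 + ((1+Complex.I)/2*(-Complex.I)^k) * Complex.I_sq
        + (Complex.I^(k^2-k)) * hP2

private lemma exp_neg_pi_div_two :
    Complex.exp ((-(Real.pi/2) : ℝ) * Complex.I) = -Complex.I := by
  push_cast
  rw [Complex.exp_mul_I]
  simp [Complex.cos_pi_div_two, Complex.sin_pi_div_two]

private lemma sqrt2_sq : ((Real.sqrt 2 : ℝ) : ℂ) * ((Real.sqrt 2 : ℝ) : ℂ) = 2 := by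
  rw [← Complex.ofReal_mul, Real.mul_self_sqrt (by norm_num)]
  norm_num

private lemma Xrot_pi_div_two : Xrot (Real.pi/2) =
    !![(1+Complex.I)/2, (1-Complex.I)/2; (1-Complex.I)/2, (1+Complex.I)/2] := by
  have h3 : ((Real.sqrt 2 : ℝ) : ℂ)⁻¹ * ((Real.sqrt 2 : ℝ) : ℂ)⁻¹ = 2⁻¹ := by
    rw [← mul_inv, sqrt2_sq]
  have hexp : Complex.exp ((Real.pi/2 : ℝ) * Complex.I) = Complex.I := by
    push_cast
    rw [Complex.exp_mul_I]
    simp [Complex.cos_pi_div_two, Complex.sin_pi_div_two]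
  unfold Xrot Hm Zrot
  rw [hexp]
  ext i j
  fin_cases i <;> fin_cases j <;>
    simp [Matrix.mul_apply, Fin.sum_univ_two] <;>
    first
      | linear_combination Complex.I*h3
      | linear_combination (-Complex.I)*h3
      | linear_combination h3
      | linear_combination (1+Complex.I)*h3
      | linear_combination (1-Complex.I)*h3

/-- v-avoiding part of the graph-state sign product -/
private def F0 {n : ℕ} (G : SimpleGraph (Fin n)) (v : Fin n) (y : Fin n → Fin 2) : ℂ :=
  ∏ a : Fin n, ∏ b : Fin n,
    if (a < b ∧ G.Adj a b ∧ y a = 1 ∧ y b = 1) ∧ ¬(a = v ∨ b = v) then (-1 : ℂ) else 1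

private lemma prod_ite_pow {α : Type*} (s : Finset α) (p : α → Prop) [DecidablePred p] (c : ℂ) :
    (∏ u ∈ s, if p u then c else 1) = c ^ (s.filter p).card := by
  rw [← Finset.prod_filter, Finset.prod_const]

private lemma prod_v {n : ℕ} (G : SimpleGraph (Fin n)) (v : Fin n) (y : Fin n → Fin 2) :
    (∏ a : Fin n, ∏ b : Fin n,
      if (a < b ∧ G.Adj a b ∧ y a = 1 ∧ y b = 1) ∧ (a = v ∨ b = v) then (-1 : ℂ) else 1)
    = if y v = 1 then
        (-1 : ℂ) ^ ((G.neighborFinset v).filter (fun u => y u = 1)).card else 1 := by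
  set g : Fin n → Fin n → ℂ := fun a b =>
    if (a < b ∧ G.Adj a b ∧ y a = 1 ∧ y b = 1) ∧ (a = v ∨ b = v) then (-1 : ℂ) else 1 with hg
  have hgvv : g v v = 1 := by simp [hg]
  have hrow : ∀ a, a ≠ v → (∏ b : Fin n, g a b) = g a v := by
    intro a ha
    refine Finset.prod_eq_single v (fun b _ hb => ?_) (by simp)
    simp only [hg]
    rw [if_neg]
    rintro ⟨-, h | h⟩ <;> [exact ha h; exact hb h]
  have hcases : ∀ u, g v u * g u v = if G.Adj v u ∧ y v = 1 ∧ y u = 1 then (-1 : ℂ) else 1 := by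
    intro u
    by_cases hA : G.Adj v u
    · have hA' : G.Adj u v := hA.symm
      have hne : v ≠ u := hA.ne
      rcases hne.lt_or_gt with h | h
      · have h' : ¬ u < v := asymm h
        simp [hg, h, h', hA]
      · have h' : ¬ v < u := asymm h
        by_cases h1 : y v = 1 <;> by_cases h2 : y u = 1 <;>
          simp [hg, h, h', hA, hA', h1, h2]
    · have hA' : ¬ G.Adj u v := fun hh => hA hh.symm
      simp [hg, hA, hA']
  calc (∏ a : Fin n, ∏ b : Fin n, g a b)
      = (∏ b : Fin n, g v b) * ∏ a ∈ Finset.univ.erase v, ∏ b : Fin n, g a b := by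
        exact (Finset.mul_prod_erase Finset.univ (fun a => ∏ b : Fin n, g a b)
          (Finset.mem_univ v)).symm
    _ = (∏ b : Fin n, g v b) * ∏ a ∈ Finset.univ.erase v, g a v := by
        congr 1
        exact Finset.prod_congr rfl fun a ha => hrow a (Finset.mem_erase.mp ha).1
    _ = (∏ b : Fin n, g v b) * ∏ a : Fin n, g a v := by
        congr 1
        exact Finset.prod_erase (f := fun a => g a v) Finset.univ hgvv
    _ = ∏ u : Fin n, (g v u * g u v) := by rw [Finset.prod_mul_distrib]
    _ = ∏ u : Fin n, (if G.Adj v u ∧ y v = 1 ∧ y u = 1 then (-1 : ℂ) else 1) :=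
        Finset.prod_congr rfl fun u _ => hcases u
    _ = if y v = 1 then
          (-1 : ℂ) ^ ((G.neighborFinset v).filter (fun u => y u = 1)).card else 1 := by
        by_cases hyv : y v = 1
        · simp only [hyv, if_true, eq_self_iff_true, true_and]
          refine (prod_ite_pow Finset.univ (fun x => G.Adj v x ∧ y x = 1) (-1)).trans ?_
          have huniv : Finset.univ.filter (fun x => G.Adj v x ∧ y x = 1)
              = (G.neighborFinset v).filter (fun u => y u = 1) := by
            ext u; simp [SimpleGraph.mem_neighborFinset]
          rw [huniv]
        · simp [hyv]

private lemma prod_split {n : ℕ} (G : SimpleGraph (Fin n)) (v : Fin n) (y : Fin n → Fin 2) :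
    (∏ a : Fin n, ∏ b : Fin n,
      if a < b ∧ G.Adj a b ∧ y a = 1 ∧ y b = 1 then (-1 : ℂ) else 1)
    = F0 G v y * if y v = 1 then
        (-1 : ℂ) ^ ((G.neighborFinset v).filter (fun u => y u = 1)).card else 1 := by
  rw [← prod_v G v y]
  unfold F0
  rw [← Finset.prod_mul_distrib]
  refine Finset.prod_congr rfl fun a _ => ?_
  rw [← Finset.prod_mul_distrib]
  refine Finset.prod_congr rfl fun b _ => ?_
  by_cases hP : a < b ∧ G.Adj a b ∧ y a = 1 ∧ y b = 1 <;>
    by_cases hQ : a = v ∨ b = v <;> simp [hP, hQ]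

private lemma prod_pairs {n : ℕ} (S : Finset (Fin n)) :
    (∏ a : Fin n, ∏ b : Fin n, if a < b ∧ a ∈ S ∧ b ∈ S then (-1 : ℂ) else 1)
    = Complex.I ^ (S.card ^ 2 - S.card) := by
  have h1 : (∏ a : Fin n, ∏ b : Fin n, if a < b ∧ a ∈ S ∧ b ∈ S then (-1 : ℂ) else 1)
      = ∏ p ∈ Finset.univ ×ˢ (Finset.univ : Finset (Fin n)),
          if p.1 < p.2 ∧ p.1 ∈ S ∧ p.2 ∈ S then (-1 : ℂ) else 1 := by
    rw [Finset.prod_product]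
  rw [h1, ← Finset.prod_filter, Finset.prod_const]
  have h2 : (Finset.univ ×ˢ (Finset.univ : Finset (Fin n))).filter
      (fun p => p.1 < p.2 ∧ p.1 ∈ S ∧ p.2 ∈ S) = (S ×ˢ S).filter (fun p => p.1 < p.2) := by
    ext ⟨a, b⟩
    simp [Finset.mem_filter, Finset.mem_product, and_comm, and_left_comm]
  rw [h2]
  set T := ((S ×ˢ S).filter (fun p => p.1 < p.2)).card with hT
  have hswap : ((S ×ˢ S).filter (fun p : Fin n × Fin n => p.2 < p.1)).card = T := by
    apply Finset.card_bij (fun p _ => (p.2, p.1))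
    · rintro ⟨a, b⟩ hp
      simp only [Finset.mem_filter, Finset.mem_product] at hp ⊢
      exact ⟨⟨hp.1.2, hp.1.1⟩, hp.2⟩
    · rintro ⟨a, b⟩ _ ⟨c, d⟩ _ h
      simpa [Prod.ext_iff, and_comm] using h
    · rintro ⟨a, b⟩ hp
      refine ⟨(b, a), ?_, rfl⟩
      simp only [Finset.mem_filter, Finset.mem_product] at hp ⊢
      exact ⟨⟨hp.1.2, hp.1.1⟩, hp.2⟩
  have hpart : T + ((S ×ˢ S).filter (fun p : Fin n × Fin n => p.2 < p.1)).card
      = S.offDiag.card := by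
    rw [hT]
    have e1 : (S ×ˢ S).filter (fun p : Fin n × Fin n => p.1 < p.2)
        = S.offDiag.filter (fun p => p.1 < p.2) := by
      ext ⟨a, b⟩
      simp only [Finset.mem_filter, Finset.mem_offDiag, Finset.mem_product]
      constructor
      · rintro ⟨⟨ha, hb⟩, h⟩; exact ⟨⟨ha, hb, ne_of_lt h⟩, h⟩
      · rintro ⟨⟨ha, hb, _⟩, h⟩; exact ⟨⟨ha, hb⟩, h⟩
    have e2 : (S ×ˢ S).filter (fun p : Fin n × Fin n => p.2 < p.1)
        = S.offDiag.filter (fun p => ¬ p.1 < p.2) := by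
      ext ⟨a, b⟩
      simp only [Finset.mem_filter, Finset.mem_offDiag, Finset.mem_product]
      constructor
      · rintro ⟨⟨ha, hb⟩, h⟩; exact ⟨⟨ha, hb, ne_of_gt h⟩, asymm h⟩
      · rintro ⟨⟨ha, hb, hne⟩, h⟩; exact ⟨⟨ha, hb⟩, hne.lt_or_gt.resolve_left h⟩
    rw [e1, e2]
    exact Finset.card_filter_add_card_filter_not _
  have hcard : S.card ^ 2 - S.card = 2 * T := by
    have := Finset.offDiag_card S
    have h2 : S.card ^ 2 = S.card * S.card := sq S.card
    omega
  rw [hcard, pow_mul, Complex.I_sq]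

private lemma localComp_adj {V : Type*} (G : SimpleGraph V) (v a b : V) :
    (localComp G v).Adj a b ↔
      a ≠ b ∧ (if G.Adj v a ∧ G.Adj v b then ¬ G.Adj a b else G.Adj a b) := Iff.rfl

private lemma localComp_neighbor {n : ℕ} (G : SimpleGraph (Fin n)) (v : Fin n) :
    (localComp G v).neighborFinset v = G.neighborFinset v := by
  ext u
  simp only [SimpleGraph.mem_neighborFinset, localComp_adj]
  constructor
  · rintro ⟨-, h⟩
    rwa [if_neg (fun hc => G.irrefl hc.1)] at h
  · intro h
    exact ⟨h.ne, by rwa [if_neg (fun hc => G.irrefl hc.1)]⟩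

private lemma F0_toggle {n : ℕ} (G : SimpleGraph (Fin n)) (v : Fin n) (y : Fin n → Fin 2) :
    F0 (localComp G v) v y = F0 G v y *
      ∏ a : Fin n, ∏ b : Fin n,
        if a < b ∧ a ∈ (G.neighborFinset v).filter (fun u => y u = 1)
            ∧ b ∈ (G.neighborFinset v).filter (fun u => y u = 1) then (-1 : ℂ) else 1 := by
  unfold F0
  rw [← Finset.prod_mul_distrib]
  refine Finset.prod_congr rfl fun a _ => ?_
  rw [← Finset.prod_mul_distrib]
  refine Finset.prod_congr rfl fun b _ => ?_
  have hmem : ∀ c : Fin n, c ∈ (G.neighborFinset v).filter (fun u => y u = 1)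
      ↔ (G.Adj v c ∧ y c = 1) := by
    intro c; simp [SimpleGraph.mem_neighborFinset]
  by_cases hab : a < b
  · by_cases h1 : y a = 1
    · by_cases h2 : y b = 1
      · by_cases hva : G.Adj v a
        · by_cases hvb : G.Adj v b
          · have hav : ¬(a = v ∨ b = v) := by
              rintro (rfl | rfl) <;> [exact G.irrefl hva; exact G.irrefl hvb]
            have hAdj : (localComp G v).Adj a b ↔ ¬ G.Adj a b := by
              rw [localComp_adj, if_pos ⟨hva, hvb⟩]
              simp [ne_of_lt hab]
            by_cases hA : G.Adj a b <;>
              simp [hmem, hab, h1, h2, hva, hvb, hav, hAdj, hA]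
          · have hAdj : (localComp G v).Adj a b ↔ G.Adj a b := by
              rw [localComp_adj, if_neg (fun hc => hvb hc.2)]
              simp [ne_of_lt hab]
            simp [hmem, hab, h1, h2, hvb, hAdj]
        · have hAdj : (localComp G v).Adj a b ↔ G.Adj a b := by
            rw [localComp_adj, if_neg (fun hc => hva hc.1)]
            simp [ne_of_lt hab]
          simp [hmem, hab, h1, h2, hva, hAdj]
      · simp [hmem, h2]
    · simp [hmem, h1]
  · simp [hab]

private lemma F0_update {n : ℕ} (G : SimpleGraph (Fin n)) (v : Fin n)
    (x : Fin n → Fin 2) (b : Fin 2) :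
    F0 G v (Function.update x v b) = F0 G v x := by
  unfold F0
  refine Finset.prod_congr rfl fun a _ => Finset.prod_congr rfl fun c _ => ?_
  by_cases hav : a = v
  · simp [hav]
  · by_cases hcv : c = v
    · simp [hcv]
    · rw [Function.update_of_ne hav, Function.update_of_ne hcv]

private lemma filter_update {n : ℕ} (G : SimpleGraph (Fin n)) (v : Fin n)
    (x : Fin n → Fin 2) (b : Fin 2) :
    (G.neighborFinset v).filter (fun u => Function.update x v b u = 1)
      = (G.neighborFinset v).filter (fun u => x u = 1) := by
  ext u
  simp only [Finset.mem_filter, SimpleGraph.mem_neighborFinset]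
  constructor
  · rintro ⟨hadj, h⟩
    exact ⟨hadj, by rwa [Function.update_of_ne hadj.ne'] at h⟩
  · rintro ⟨hadj, h⟩
    exact ⟨hadj, by rwa [Function.update_of_ne hadj.ne']⟩

private lemma act1_mulVec_apply {n : ℕ} (A : Matrix (Fin 2) (Fin 2) ℂ) (v : Fin n)
    (w : (Fin n → Fin 2) → ℂ) (x : Fin n → Fin 2) :
    (act1 A v *ᵥ w) x
      = A (x v) 0 * w (Function.update x v 0) + A (x v) 1 * w (Function.update x v 1) := by
  have h2cases : ∀ t : Fin 2, t = 0 ∨ t = 1 := by decide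
  have hprod1 : ∀ b : Fin 2,
      (∏ w' : Fin n, if w' = v then (1:ℂ)
        else if x w' = Function.update x v b w' then 1 else 0) = 1 := by
    intro b
    refine Finset.prod_eq_one fun w' _ => ?_
    by_cases h : w' = v
    · simp [h]
    · simp [h, Function.update_of_ne h]
  have hne : Function.update x v 0 ≠ Function.update x v 1 := by
    intro h
    have := congrFun h v
    simp at this
  have hzero : ∀ y ∈ (Finset.univ : Finset (Fin n → Fin 2)),
      y ∉ ({Function.update x v 0, Function.update x v 1} : Finset (Fin n → Fin 2)) →
      A (x v) (y v) * (∏ w' : Fin n, if w' = v then (1:ℂ)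
        else if x w' = y w' then 1 else 0) * w y = 0 := by
    intro y _ hy
    have hex : ∃ w', w' ≠ v ∧ x w' ≠ y w' := by
      by_contra hc
      push_neg at hc
      have hyeq : y = Function.update x v (y v) := by
        funext w'
        by_cases h : w' = v
        · subst h; simp
        · rw [Function.update_of_ne h]; exact (hc w' h).symm
      apply hy
      rcases h2cases (y v) with h | h
      · rw [hyeq, h]; exact Finset.mem_insert_self _ _
      · rw [hyeq, h]; exact Finset.mem_insert_of_mem (Finset.mem_singleton_self _)
    obtain ⟨w', hw'v, hw'⟩ := hex
    have hp0 : (∏ w'' : Fin n, if w'' = v then (1:ℂ)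
        else if x w'' = y w'' then 1 else 0) = 0 :=
      Finset.prod_eq_zero (Finset.mem_univ w') (by simp [hw'v, hw'])
    rw [hp0, mul_zero, zero_mul]
  have hmain : (act1 A v *ᵥ w) x = ∑ y : Fin n → Fin 2,
      A (x v) (y v) * (∏ w' : Fin n, if w' = v then (1:ℂ)
        else if x w' = y w' then 1 else 0) * w y := by
    simp [Matrix.mulVec, dotProduct, act1, mul_assoc]
  rw [hmain, ← Finset.sum_subset
    (Finset.subset_univ ({Function.update x v 0, Function.update x v 1} : Finset _)) hzero,
    Finset.sum_pair hne]
  simp [hprod1, Function.update_self]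

/-- Van den Nest's theorem: `|G*v⟩ = M_v |G⟩` up to a global phase, where
`M_v = X(π/2)_v ∏_{u ∈ N(v)} Z(−π/2)_u`. -/
theorem vandennest {n : ℕ} (G : SimpleGraph (Fin n)) (v : Fin n) :
    ∃ θ : ℝ, graphState (localComp G v) =
      Complex.exp (θ * Complex.I) •
        (act1 (Xrot (Real.pi / 2)) v * zrotS (-(Real.pi / 2)) (G.neighborFinset v)).mulVec
          (graphState G) := by
  have h2cases : ∀ t : Fin 2, t = 0 ∨ t = 1 := by decide
  refine ⟨0, funext fun x => ?_⟩
  simp only [Pi.smul_apply, smul_eq_mul, Complex.ofReal_zero, zero_mul, Complex.exp_zero, one_mul]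
  rw [← Matrix.mulVec_mulVec]
  set N := G.neighborFinset v with hN
  set S := N.filter (fun u => x u = 1) with hS
  set k := S.card with hk
  set cc := ((Real.sqrt 2 : ℂ))⁻¹ ^ n with hcc
  have hz : zrotS (-(Real.pi/2)) N *ᵥ graphState G
      = fun y => (-Complex.I) ^ ((N.filter fun u => y u = 1).card) * graphState G y := by
    funext y
    show (Matrix.diagonal _ *ᵥ _) y = _
    rw [Matrix.mulVec_diagonal]
    congr 1
    simp only [exp_neg_pi_div_two]
    exact prod_ite_pow _ _ _
  rw [hz, act1_mulVec_apply]
  have hup : ∀ b : Fin 2,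
      graphState G (Function.update x v b) = cc * (F0 G v x * if b = 1 then (-1:ℂ)^k else 1) := by
    intro b
    unfold graphState
    rw [prod_split G v (Function.update x v b), F0_update, filter_update,
      Function.update_self]
  have hfil : ∀ b : Fin 2,
      Finset.filter (fun u => Function.update x v b u = 1) N = S :=
    fun b => filter_update G v x b
  rw [hfil 0, hfil 1, hup 0, hup 1]
  -- left side
  show graphState (localComp G v) x = _
  unfold graphState
  rw [prod_split (localComp G v) v x, localComp_neighbor, F0_toggle, prod_pairs]
  rw [Xrot_pi_div_two]
  have hk2 : (Finset.filter (fun u => x u = 1) (G.neighborFinset v)).card = k := rfl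
  rw [hk2]
  rcases h2cases (x v) with hxv | hxv <;> rw [hxv] <;>
    simp only [Matrix.cons_val', Matrix.cons_val_zero, Matrix.cons_val_one, Matrix.head_cons,
      Matrix.empty_val', Matrix.cons_val_fin_one, Matrix.head_fin_const, Matrix.of_apply,
      if_neg (show ¬(0:Fin 2) = 1 by decide), if_pos (rfl : (1:Fin 2) = 1), mul_one,
      eq_self_iff_true, if_true]
  · linear_combination (-(cc * F0 G v x)) * (vdn_key k).1
      - (cc * F0 G v x * (-Complex.I)^k * (-1:ℂ)^k / 2) * Complex.I_sq
  · linear_combination (-(cc * F0 G v x)) * (vdn_key k).2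
      - (cc * F0 G v x * (-Complex.I)^k / 2) * Complex.I_sq
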